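/- Let d ≥ 5 and let ξ : ℤ^d → ℝ be square-summable with |ξ_x| ≤ 1/2 for all x, where Δ is the Laplacian of the nearest-neighbor graph on ℤ^d. If ν = Δξ is integer-valued and nonzero at at least three distinct points (i.e., |supp ν| ≥ 3), then Σ_{x∈ℤ^d} ξ_x² ≥ 3/(4d² + 10d). -/

import Mathlib

/-!
Let `Q = 2d + A` be the signless Laplacian of `ℤ^d`. Pointwise `|Δξ| ≤ Q|ξ|`, so for a finite set
`Z` of points with `|Δξ z| ≥ 1` we get `|Z| ≤ ∑_{z ∈ Z} (Q|ξ|)(z) = ⟨u, |ξ|⟩`, where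
`u = ∑_{z ∈ Z} Q(z, ·)`, and Cauchy–Schwarz gives `|Z|² ≤ ‖u‖² ‖ξ‖²`. Since `ℤ^d` is bipartite
(by the parity of the coordinate sum), the rows of `Q` are almost orthogonal:
`⟨Q(z, ·), Q(z, ·)⟩ = 4d² + 2d` and `⟨Q(z, ·), Q(z', ·)⟩ ≤ 4d` for `z ≠ z'`. Hence
`‖u‖² ≤ |Z| (4d² + (4|Z| - 2) d)`, which for `|Z| = 3` is `3 (4d² + 10d)`.
-/

/-- The graph Laplacian of the nearest-neighbor lattice `ℤ^d`. -/
noncomputable def zdLap (d : ℕ) (f : (Fin d → ℤ) → ℝ) (v : Fin d → ℤ) : ℝ :=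
  2 * d * f v - ∑ i : Fin d, (f (v + Pi.single i 1) + f (v - Pi.single i 1))

open Finset

noncomputable def zdSignlessLap (d : ℕ) (f : (Fin d → ℤ) → ℝ) (v : Fin d → ℤ) : ℝ :=
  2 * d * f v + ∑ i : Fin d, (f (v + Pi.single i 1) + f (v - Pi.single i 1))

/-- The matrix of `zdSignlessLap`: `2d` on the diagonal, `1` between neighbours, `0` elsewhere. -/
noncomputable def zdSignlessKernel (d : ℕ) (v w : Fin d → ℤ) : ℝ :=
  zdSignlessLap d (Pi.single w 1) v

namespace ZdLattice

variable {d : ℕ}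

lemma sum_add_single_modEq_two_iff {v w : Fin d → ℤ} (i : Fin d) :
    ∑ j, (v + Pi.single i 1 : Fin d → ℤ) j ≡ ∑ j, w j [ZMOD 2] ↔
      ¬ ∑ j, v j ≡ ∑ j, w j [ZMOD 2] := by
  simp only [Pi.add_apply, sum_add_distrib, sum_pi_single', mem_univ, if_true, Int.ModEq]
  omega

lemma sum_sub_single_modEq_two_iff {v w : Fin d → ℤ} (i : Fin d) :
    ∑ j, (v - Pi.single i 1 : Fin d → ℤ) j ≡ ∑ j, w j [ZMOD 2] ↔
      ¬ ∑ j, v j ≡ ∑ j, w j [ZMOD 2] := by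
  simp only [Pi.sub_apply, sum_sub_distrib, sum_pi_single', mem_univ, if_true, Int.ModEq]
  omega

lemma add_single_ne_of_modEq {v w : Fin d → ℤ} (h : ∑ j, v j ≡ ∑ j, w j [ZMOD 2]) (i : Fin d) :
    v + Pi.single i 1 ≠ w := fun hw =>
  (sum_add_single_modEq_two_iff i).1 (by rw [hw]) h

lemma sub_single_ne_of_modEq {v w : Fin d → ℤ} (h : ∑ j, v j ≡ ∑ j, w j [ZMOD 2]) (i : Fin d) :
    v - Pi.single i 1 ≠ w := fun hw =>
  (sum_sub_single_modEq_two_iff i).1 (by rw [hw]) h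

lemma add_single_mem_Icc (v : Fin d → ℤ) (i : Fin d) :
    v + Pi.single i 1 ∈ Icc (v - 1) (v + 1) := by
  simp only [mem_Icc, Pi.le_def, Pi.add_apply, Pi.sub_apply, Pi.one_apply, Pi.single_apply]
  constructor <;> intro j <;> split_ifs <;> omega

lemma sub_single_mem_Icc (v : Fin d → ℤ) (i : Fin d) :
    v - Pi.single i 1 ∈ Icc (v - 1) (v + 1) := by
  simp only [mem_Icc, Pi.le_def, Pi.add_apply, Pi.sub_apply, Pi.one_apply, Pi.single_apply]
  constructor <;> intro j <;> split_ifs <;> omega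

lemma abs_zdLap_le (f : (Fin d → ℤ) → ℝ) (v : Fin d → ℤ) :
    |zdLap d f v| ≤ zdSignlessLap d (|f ·|) v := by
  unfold zdLap zdSignlessLap
  calc _ ≤ |2 * d * f v| + |∑ i, (f (v + Pi.single i 1) + f (v - Pi.single i 1))| := abs_sub _ _
    _ ≤ _ := by
      rw [abs_mul, abs_of_nonneg (by positivity : (0 : ℝ) ≤ 2 * d)]
      gcongr
      exact (abs_sum_le_sum_abs _ _).trans (sum_le_sum fun _ _ => abs_add_le _ _)

lemma sum_zdSignlessKernel_mul {S : Finset (Fin d → ℤ)} {v : Fin d → ℤ}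
    (hS : Icc (v - 1) (v + 1) ⊆ S) (g : (Fin d → ℤ) → ℝ) :
    ∑ w ∈ S, zdSignlessKernel d v w * g w = zdSignlessLap d g v := by
  have hv : v ∈ S := hS (by simp)
  simp only [zdSignlessKernel, zdSignlessLap, Pi.single_apply, add_mul, sum_mul, ite_mul, one_mul,
    zero_mul, mul_ite, mul_one, mul_zero, sum_add_distrib]
  rw [sum_comm (s := S), sum_comm (s := S)]
  simp [sum_ite_eq, hv, hS (add_single_mem_Icc v _), hS (sub_single_mem_Icc v _)]

lemma zdSignlessKernel_of_modEq {v w : Fin d → ℤ} (h : ∑ i, v i ≡ ∑ i, w i [ZMOD 2]) :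
    zdSignlessKernel d v w = if v = w then 2 * (d : ℝ) else 0 := by
  simp [zdSignlessKernel, zdSignlessLap, Pi.single_apply, add_single_ne_of_modEq h,
    sub_single_ne_of_modEq h]

lemma zdSignlessKernel_le_one {v w : Fin d → ℤ} (h : v ≠ w) : zdSignlessKernel d v w ≤ 1 := by
  simp only [zdSignlessKernel, zdSignlessLap, Pi.single_apply, if_neg h, mul_zero, zero_add]
  by_cases hw : ∃ i, v + Pi.single i 1 = w ∨ v - Pi.single i 1 = w
  · obtain ⟨i, hi⟩ := hw
    have hother : ∀ j ≠ i, v + Pi.single j 1 ≠ w ∧ v - Pi.single j 1 ≠ w := by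
      intro j hj
      constructor <;> intro hj' <;> rcases hi with hi | hi <;>
        simpa [hj, ← hi] using congrFun hj' j
    have hnot_both : ¬ (v + Pi.single i 1 = w ∧ v - Pi.single i 1 = w) := by
      rintro ⟨h₁, h₂⟩
      have := congrFun (h₁.trans h₂.symm) i
      simp at this
      omega
    rw [sum_eq_single i (fun j _ hj => by simp [hother j hj]) (by simp)]
    split_ifs <;> simp_all
  · push Not at hw
    simp [hw]

lemma zdSignlessLap_kernel_self_le (v : Fin d → ℤ) :
    zdSignlessLap d (zdSignlessKernel d v) v ≤ 4 * d ^ 2 + 2 * d := by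
  have hvv : zdSignlessKernel d v v = 2 * d := by
    simp [zdSignlessKernel_of_modEq (Int.ModEq.refl _)]
  have hnbr : ∑ i, (zdSignlessKernel d v (v + Pi.single i 1) +
      zdSignlessKernel d v (v - Pi.single i 1)) ≤ ∑ _i : Fin d, (1 + 1 : ℝ) :=
    sum_le_sum fun i _ => add_le_add
      (zdSignlessKernel_le_one (add_single_ne_of_modEq (.refl _) i).symm)
      (zdSignlessKernel_le_one (sub_single_ne_of_modEq (.refl _) i).symm)
  rw [zdSignlessLap, hvv]
  simp only [sum_const, card_univ, Fintype.card_fin, nsmul_eq_mul] at hnbr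
  linarith

lemma zdSignlessLap_kernel_le_of_ne {v w : Fin d → ℤ} (h : v ≠ w) :
    zdSignlessLap d (zdSignlessKernel d w) v ≤ 4 * d := by
  by_cases hp : ∑ i, v i ≡ ∑ i, w i [ZMOD 2]
  · have hwv : zdSignlessKernel d w v = 0 := by
      simp [zdSignlessKernel_of_modEq hp.symm, Ne.symm h]
    have hnbr : ∑ i, (zdSignlessKernel d w (v + Pi.single i 1) +
        zdSignlessKernel d w (v - Pi.single i 1)) ≤ ∑ _i : Fin d, (1 + 1 : ℝ) :=
      sum_le_sum fun i _ => add_le_add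
        (zdSignlessKernel_le_one (add_single_ne_of_modEq hp i).symm)
        (zdSignlessKernel_le_one (sub_single_ne_of_modEq hp i).symm)
    rw [zdSignlessLap, hwv]
    simp only [sum_const, card_univ, Fintype.card_fin, nsmul_eq_mul] at hnbr
    linarith
  · -- the neighbours of `v` have the parity of `w`, so only `w` itself can be among them
    have hnbr : ∑ i, (zdSignlessKernel d w (v + Pi.single i 1) +
        zdSignlessKernel d w (v - Pi.single i 1)) = 2 * d * zdSignlessKernel d v w := by
      have hvw : zdSignlessKernel d v w =
          ∑ i, ((if v + Pi.single i 1 = w then 1 else 0) +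
            if v - Pi.single i 1 = w then 1 else 0) := by
        simp [zdSignlessKernel, zdSignlessLap, Pi.single_apply, h]
      rw [hvw, mul_sum]
      refine sum_congr rfl fun i _ => ?_
      rw [zdSignlessKernel_of_modEq ((sum_add_single_modEq_two_iff i).2 hp).symm,
        zdSignlessKernel_of_modEq ((sum_sub_single_modEq_two_iff i).2 hp).symm]
      simp only [eq_comm (b := w)]
      split_ifs <;> ring
    rw [zdSignlessLap, hnbr]
    have := zdSignlessKernel_le_one (d := d) h
    have := zdSignlessKernel_le_one (d := d) (Ne.symm h)
    nlinarith

lemma sum_sq_zdSignlessKernel_le (Z : Finset (Fin d → ℤ)) {S : Finset (Fin d → ℤ)}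
    (hS : ∀ z ∈ Z, Icc (z - 1) (z + 1) ⊆ S) :
    ∑ w ∈ S, (∑ z ∈ Z, zdSignlessKernel d z w) ^ 2 ≤ #Z * (4 * d ^ 2 + (4 * #Z - 2) * d) := by
  have hgram : ∀ z ∈ Z, ∀ z' ∈ Z, ∑ w ∈ S, zdSignlessKernel d z w * zdSignlessKernel d z' w ≤
      4 * (d : ℝ) + if z = z' then 4 * (d : ℝ) ^ 2 - 2 * d else 0 := by
    intro z hz z' _
    rw [sum_zdSignlessKernel_mul (hS z hz)]
    split_ifs with h
    · subst h
      linarith [zdSignlessLap_kernel_self_le (d := d) z]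
    · linarith [zdSignlessLap_kernel_le_of_ne (d := d) h]
  calc ∑ w ∈ S, (∑ z ∈ Z, zdSignlessKernel d z w) ^ 2
      = ∑ z ∈ Z, ∑ z' ∈ Z, ∑ w ∈ S, zdSignlessKernel d z w * zdSignlessKernel d z' w := by
        simp only [sq, sum_mul_sum]
        rw [sum_comm]
        exact sum_congr rfl fun _ _ => sum_comm
    _ ≤ ∑ z ∈ Z, ∑ z' ∈ Z, (4 * (d : ℝ) + if z = z' then 4 * (d : ℝ) ^ 2 - 2 * d else 0) :=
        sum_le_sum fun z hz => sum_le_sum fun z' hz' => hgram z hz z' hz'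
    _ = #Z * (4 * d ^ 2 + (4 * #Z - 2) * d) := by
        simp [sum_add_distrib]
        ring

lemma one_le_abs_of_ne_zero {x : ℝ} (hx : ∃ n : ℤ, x = n) (h : x ≠ 0) : 1 ≤ |x| := by
  obtain ⟨n, rfl⟩ := hx
  rw [← Int.cast_abs]
  exact_mod_cast Int.one_le_abs (by rintro rfl; simp at h)

theorem card_div_le_tsum_sq (Z : Finset (Fin d → ℤ)) (ξ : (Fin d → ℤ) → ℝ)
    (hsum : Summable (fun x => ξ x ^ 2)) (hZ : ∀ z ∈ Z, 1 ≤ |zdLap d ξ z|) :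
    (#Z : ℝ) / (4 * d ^ 2 + (4 * #Z - 2) * d) ≤ ∑' x, ξ x ^ 2 := by
  obtain ⟨S, hS⟩ : ∃ S : Finset (Fin d → ℤ), ∀ z ∈ Z, Icc (z - 1) (z + 1) ⊆ S :=
    ⟨Z.biUnion fun z => Icc (z - 1) (z + 1),
      fun _ hz => subset_biUnion_of_mem (fun z => Icc (z - 1) (z + 1)) hz⟩
  let u w := ∑ z ∈ Z, zdSignlessKernel d z w
  have hpair : (#Z : ℝ) ≤ ∑ w ∈ S, u w * |ξ w| := calc
    (#Z : ℝ) = ∑ z ∈ Z, 1 := by simp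
    _ ≤ ∑ z ∈ Z, |zdLap d ξ z| := sum_le_sum hZ
    _ ≤ ∑ z ∈ Z, zdSignlessLap d (|ξ ·|) z := sum_le_sum fun z _ => abs_zdLap_le ξ z
    _ = ∑ w ∈ S, u w * |ξ w| := by
      simp only [u, sum_mul]
      rw [sum_comm]
      exact sum_congr rfl fun z hz => (sum_zdSignlessKernel_mul (hS z hz) _).symm
  have hξ : ∑ w ∈ S, |ξ w| ^ 2 ≤ ∑' x, ξ x ^ 2 := by
    simpa only [sq_abs] using hsum.sum_le_tsum S fun _ _ => sq_nonneg _
  have hT : 0 ≤ ∑' x, ξ x ^ 2 := tsum_nonneg fun _ => sq_nonneg _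
  rcases le_or_gt (4 * d ^ 2 + (4 * #Z - 2) * d : ℝ) 0 with hD | hD
  · exact (div_nonpos_of_nonneg_of_nonpos (by positivity) hD).trans hT
  rw [div_le_iff₀ hD]
  have hsq : (#Z : ℝ) * #Z ≤ #Z * ((∑' x, ξ x ^ 2) * (4 * d ^ 2 + (4 * #Z - 2) * d)) := calc
    (#Z : ℝ) * #Z ≤ (∑ w ∈ S, u w * |ξ w|) ^ 2 := by nlinarith
    _ ≤ (∑ w ∈ S, u w ^ 2) * ∑ w ∈ S, |ξ w| ^ 2 := sum_mul_sq_le_sq_mul_sq S u (|ξ ·|)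
    _ ≤ #Z * (4 * d ^ 2 + (4 * #Z - 2) * d) * ∑' x, ξ x ^ 2 :=
      mul_le_mul (sum_sq_zdSignlessKernel_le Z hS) hξ (sum_nonneg fun _ _ => sq_nonneg _)
        (by positivity)
    _ = _ := by ring
  rcases (#Z).eq_zero_or_pos with h0 | hpos
  · exact (Nat.cast_eq_zero.mpr h0).trans_le (mul_nonneg hT hD.le)
  · exact le_of_mul_le_mul_left hsq (Nat.cast_pos.mpr hpos)

end ZdLattice

theorem zd_three_point_support_two_norm_general (d : ℕ)
    (ξ : (Fin d → ℤ) → ℝ)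
    (hsum : Summable (fun x => ξ x ^ 2))
    (hint : ∀ x, ∃ n : ℤ, zdLap d ξ x = n)
    (z₁ z₂ z₃ : Fin d → ℤ) (h12 : z₁ ≠ z₂) (h13 : z₁ ≠ z₃) (h23 : z₂ ≠ z₃)
    (h₁ : zdLap d ξ z₁ ≠ 0) (h₂ : zdLap d ξ z₂ ≠ 0) (h₃ : zdLap d ξ z₃ ≠ 0) :
    3 / (4 * (d : ℝ) ^ 2 + 10 * d) ≤ ∑' x, ξ x ^ 2 := by
  have hcard : #{z₁, z₂, z₃} = 3 := card_eq_three.mpr ⟨z₁, z₂, z₃, h12, h13, h23, rfl⟩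
  have hZ : ∀ z ∈ ({z₁, z₂, z₃} : Finset _), 1 ≤ |zdLap d ξ z| := by
    simp only [mem_insert, mem_singleton]
    rintro z (rfl | rfl | rfl)
    exacts [ZdLattice.one_le_abs_of_ne_zero (hint _) h₁,
      ZdLattice.one_le_abs_of_ne_zero (hint _) h₂, ZdLattice.one_le_abs_of_ne_zero (hint _) h₃]
  have := ZdLattice.card_div_le_tsum_sq _ ξ hsum hZ
  rw [hcard] at this
  convert this using 2 <;> push_cast <;> ring

/-- Let `d ≥ 5` and let `ξ : ℤ^d → ℝ` be square-summable with `|ξ_x| ≤ 1/2`.  If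
`ν = Δξ` is integer valued and nonzero at three distinct points, then
`Σₓ ξ_x² ≥ 3/(4d² + 10d)`. -/
theorem zd_three_point_support_two_norm (d : ℕ) (hd : 5 ≤ d)
    (ξ : (Fin d → ℤ) → ℝ)
    (hsum : Summable (fun x => ξ x ^ 2)) (hbdd : ∀ x, |ξ x| ≤ 1 / 2)
    (hint : ∀ x, ∃ n : ℤ, zdLap d ξ x = n)
    (z₁ z₂ z₃ : Fin d → ℤ) (h12 : z₁ ≠ z₂) (h13 : z₁ ≠ z₃) (h23 : z₂ ≠ z₃)
    (h₁ : zdLap d ξ z₁ ≠ 0) (h₂ : zdLap d ξ z₂ ≠ 0) (h₃ : zdLap d ξ z₃ ≠ 0) :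
    3 / (4 * (d : ℝ) ^ 2 + 10 * d) ≤ ∑' x, ξ x ^ 2 :=
  zd_three_point_support_two_norm_general d ξ hsum hint z₁ z₂ z₃ h12 h13 h23 h₁ h₂ h₃
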